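/- Let x : Fin n → F be a nonzero vector all of whose entries lie in the image of the constant embedding 𝔽q → F, and let g ∈ GL n F. Then for every nonempty subset S of GL n F whose elements all lie in GL n R, there exists s₀ ∈ S such that ‖x·(s₀*g : Matrix (Fin n) (Fin n) F)‖ ≤ ‖x·(s*g : Matrix (Fin n) (Fin n) F)‖ for all s ∈ S; i.e., the set {‖x·(s*g)‖ : s ∈ S} has a positive minimal element. (Proposition 10, second part.) -/

import Mathlib

/- Setting: `F = 𝔽q((X))` is the field of formal Laurent series over a finite field `𝔽q`,
with valuation `v = Valued.v : F → ℤₘ₀` (normalized by `v X = ofAdd (-1)`), ring of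
integers `O = 𝔽q[[X]] = {f | v f ≤ 1}`. -/

open scoped Multiplicative

noncomputable section

variable (𝔽q : Type*) [Field 𝔽q] [Fintype 𝔽q]

/-- `F = 𝔽q((X))`, the field of formal Laurent series over `𝔽q`. -/
abbrev F : Type _ := LaurentSeries 𝔽q

/-- The uniformizer `X` of `F`. -/
def XX : F 𝔽q := ((PowerSeries.X : PowerSeries 𝔽q) : LaurentSeries 𝔽q)

/-- The sup-norm `‖x‖ = sup_i v (x i)` of a row vector over `F`. -/
def vnorm {n : ℕ} (x : Fin n → F 𝔽q) : WithZero (Multiplicative ℤ) :=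
  Finset.univ.sup fun i => Valued.v (x i)

/-- `f` lies in the ring of integers `O = 𝔽q[[X]]` iff `v f ≤ 1`. -/
def inO (f : F 𝔽q) : Prop := Valued.v f ≤ 1

/-- `f` lies in `R = 𝔽q[X⁻¹]`: a Laurent series with finite support contained in
nonpositive degrees. -/
def inR (f : F 𝔽q) : Prop := f.support.Finite ∧ ∀ d ∈ f.support, d ≤ 0

/-- `g ∈ GL n F` lies in `GL n O`: every entry of `g` and of `g⁻¹` lies in `O`. -/
def inGLO {n : ℕ} (g : GL (Fin n) (F 𝔽q)) : Prop :=
  (∀ i j, inO 𝔽q ((g : Matrix (Fin n) (Fin n) (F 𝔽q)) i j)) ∧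
  (∀ i j, inO 𝔽q ((↑(g⁻¹) : Matrix (Fin n) (Fin n) (F 𝔽q)) i j))

/-- `γ ∈ GL n F` lies in `GL n R`: every entry of `γ` and of `γ⁻¹` lies in `R`. -/
def inGLR {n : ℕ} (γ : GL (Fin n) (F 𝔽q)) : Prop :=
  (∀ i j, inR 𝔽q ((γ : Matrix (Fin n) (Fin n) (F 𝔽q)) i j)) ∧
  (∀ i j, inR 𝔽q ((↑(γ⁻¹) : Matrix (Fin n) (Fin n) (F 𝔽q)) i j))

/-! For `s ∈ S` the vector `y = x·s` is nonzero with entries in `R = 𝔽q[X⁻¹]`, and a nonzero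
element of `R` has valuation at least `1`, so `1 ≤ ‖y‖ = ‖(x·(s g))·g⁻¹‖ ≤ ‖x·(s g)‖ · ‖g⁻¹‖`,
where `‖g⁻¹‖` is the largest valuation of an entry of `g⁻¹`. Hence the norms `‖x·(s g)‖` are
bounded below by the nonzero constant `‖g⁻¹‖⁻¹`, and such a subset of `ℤᵐ⁰` has a least element
because the value group `ℤ` is discrete. -/

open Matrix WithZero

section Valuation

variable {K Γ₀ : Type*} [Ring K] [LinearOrderedCommGroupWithZero Γ₀] (v : Valuation K Γ₀)
  {m n : Type*} [Fintype m] [Fintype n]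

theorem Valuation.map_vecMul_le (y : m → K) (M : Matrix m n K) (j : n) :
    v ((y ᵥ* M) j) ≤ (Finset.univ.sup fun i => v (y i)) *
      Finset.univ.sup fun p : m × n => v (M p.1 p.2) :=
  v.map_sum_le fun i _ => (v.map_mul _ _).trans_le <| mul_le_mul'
    (Finset.le_sup (f := fun i => v (y i)) (Finset.mem_univ i))
    (Finset.le_sup (f := fun p : m × n => v (M p.1 p.2)) (Finset.mem_univ (i, j)))

end Valuation

theorem WithZero.exists_min_of_le {α : Type*} {N : α → ℤᵐ⁰} {S : Set α} (hS : S.Nonempty)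
    {c : ℤᵐ⁰} (hc : c ≠ 0) (hcN : ∀ s ∈ S, c ≤ N s) : ∃ s₀ ∈ S, ∀ s ∈ S, N s₀ ≤ N s := by
  have hN : ∀ s ∈ S, N s ≠ 0 := fun s hs => ne_bot_of_le_ne_bot hc (hcN s hs)
  obtain ⟨-, ⟨s₀, hs₀, rfl⟩, hmin⟩ := Int.exists_least_of_bdd
    (P := fun k => ∃ s ∈ S, log (N s) = k)
    ⟨log c, by rintro _ ⟨s, hs, rfl⟩; exact (log_le_log hc (hN s hs)).2 (hcN s hs)⟩
    (let ⟨s, hs⟩ := hS; ⟨_, s, hs, rfl⟩)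
  exact ⟨s₀, hs₀, fun s hs => (log_le_log (hN s₀ hs₀) (hN s hs)).1 (hmin _ ⟨s, hs, rfl⟩)⟩

theorem LaurentSeries.one_le_valuation_of_support_nonpos {K : Type*} [Field K]
    {f : LaurentSeries K} (hf : ∀ d ∈ f.support, d ≤ 0) (h0 : f ≠ 0) : 1 ≤ Valued.v f := by
  have hv : Valued.v f ≠ 0 := by simpa using h0
  by_contra! hlt
  have hlog : log (Valued.v f) < 0 := (log_lt_iff_lt_exp hv).2 (by simpa using hlt)
  have hcoeff := (LaurentSeries.valuation_le_iff_coeff_lt_log_eq_zero K hv).1 le_rfl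
  obtain ⟨d, hd⟩ := HahnSeries.support_nonempty_iff.2 h0
  exact hd (hcoeff d (by linarith [hf d hd]))

section PolynomialsInXInv

variable (K : Type*) [Field K]

def subringR : Subring (F K) where
  carrier := {f | inR K f}
  zero_mem' := by simp [inR]
  one_mem' := by simp [inR, HahnSeries.support_one]
  add_mem' {f g} hf hg := ⟨(hf.1.union hg.1).subset (HahnSeries.support_add_subset f g),
    fun d hd => (HahnSeries.support_add_subset f g hd).elim (hf.2 d) (hg.2 d)⟩
  neg_mem' {f} hf := by simpa [inR, HahnSeries.support_neg] using hf
  mul_mem' {f g} hf hg := ⟨(hf.1.add hg.1).subset HahnSeries.support_mul_subset, fun d hd => by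
    obtain ⟨a, ha, b, hb, rfl⟩ := HahnSeries.support_mul_subset hd
    exact add_nonpos (hf.2 a ha) (hg.2 b hb)⟩

variable {K}

theorem inR_C (c : K) : inR K (HahnSeries.C c) :=
  ⟨(Set.finite_singleton 0).subset HahnSeries.support_single_subset, fun _ hd =>
    (Set.mem_singleton_iff.1 (HahnSeries.support_single_subset hd)).le⟩

theorem one_le_valuation_of_inR {f : F K} (hf : inR K f) (h0 : f ≠ 0) : 1 ≤ Valued.v f :=
  LaurentSeries.one_le_valuation_of_support_nonpos hf.2 h0

variable {n : ℕ}

theorem inR_vecMul {y : Fin n → F K} {M : Matrix (Fin n) (Fin n) (F K)} (hy : ∀ i, inR K (y i))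
    (hM : ∀ i j, inR K (M i j)) (j : Fin n) : inR K ((y ᵥ* M) j) :=
  Subring.sum_mem (subringR K) fun i _ => Subring.mul_mem (subringR K) (hy i) (hM i j)

theorem one_le_vnorm_of_inR {y : Fin n → F K} (hy : ∀ i, inR K (y i)) (h0 : y ≠ 0) :
    1 ≤ vnorm K y := by
  obtain ⟨i, hi⟩ := Function.ne_iff.1 h0
  exact (one_le_valuation_of_inR (hy i) hi).trans
    (Finset.le_sup (f := fun i => Valued.v (y i)) (Finset.mem_univ i))

end PolynomialsInXInv

section MatrixNorm

variable {K : Type*} [Field K] {n : ℕ}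

def matNorm {m : Type*} [Fintype m] (M : Matrix m m (F K)) : ℤᵐ⁰ :=
  Finset.univ.sup fun p : m × m => Valued.v (M p.1 p.2)

theorem vnorm_vecMul_le (y : Fin n → F K) (M : Matrix (Fin n) (Fin n) (F K)) :
    vnorm K (y ᵥ* M) ≤ vnorm K y * matNorm M :=
  Finset.sup_le fun j _ => Valued.v.map_vecMul_le y M j

theorem one_le_vnorm_vecMul_mul {x : Fin n → F K} (hxR : ∀ i, inR K (x i)) (hx : x ≠ 0)
    {s : GL (Fin n) (F K)} (hs : ∀ i j, inR K ((s : Matrix (Fin n) (Fin n) (F K)) i j))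
    (g : GL (Fin n) (F K)) :
    1 ≤ vnorm K (x ᵥ* ((s * g : GL (Fin n) (F K)) : Matrix (Fin n) (Fin n) (F K))) *
      matNorm (↑g⁻¹ : Matrix (Fin n) (Fin n) (F K)) := by
  have hxs : x ᵥ* (s : Matrix (Fin n) (Fin n) (F K)) ≠ 0 := by
    simpa using (vecMul_injective_of_isUnit s.isUnit).ne hx
  calc 1 ≤ vnorm K (x ᵥ* (s : Matrix (Fin n) (Fin n) (F K))) :=
        one_le_vnorm_of_inR (inR_vecMul hxR hs) hxs
    _ = vnorm K (x ᵥ* ((s * g : GL (Fin n) (F K)) : Matrix (Fin n) (Fin n) (F K)) ᵥ* ↑g⁻¹) := by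
        rw [vecMul_vecMul, ← Units.val_mul, mul_inv_cancel_right]
    _ ≤ _ := vnorm_vecMul_le _ _

end MatrixNorm

theorem exists_min_norm (n : ℕ)
    (x : Fin n → F 𝔽q) (hx : x ≠ 0)
    (hxconst : ∀ i, ∃ c : 𝔽q, x i = HahnSeries.C c)
    (g : GL (Fin n) (F 𝔽q))
    (S : Set (GL (Fin n) (F 𝔽q))) (hS : S.Nonempty) (hSR : ∀ s ∈ S, inGLR 𝔽q s) :
    ∃ s₀ ∈ S,
      0 < vnorm 𝔽q (Matrix.vecMul x
          ((s₀ * g : GL (Fin n) (F 𝔽q)) : Matrix (Fin n) (Fin n) (F 𝔽q))) ∧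
      ∀ s ∈ S,
        vnorm 𝔽q (Matrix.vecMul x
            ((s₀ * g : GL (Fin n) (F 𝔽q)) : Matrix (Fin n) (Fin n) (F 𝔽q))) ≤
        vnorm 𝔽q (Matrix.vecMul x
            ((s * g : GL (Fin n) (F 𝔽q)) : Matrix (Fin n) (Fin n) (F 𝔽q))) := by
  let N (s : GL (Fin n) (F 𝔽q)) : ℤᵐ⁰ :=
    vnorm 𝔽q (x ᵥ* ((s * g : GL (Fin n) (F 𝔽q)) : Matrix (Fin n) (Fin n) (F 𝔽q)))
  set C := matNorm (↑g⁻¹ : Matrix (Fin n) (Fin n) (F 𝔽q))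
  have hxR : ∀ i, inR 𝔽q (x i) := fun i => (hxconst i).elim fun c hc => hc ▸ inR_C c
  have key : ∀ s ∈ S, 1 ≤ N s * C := fun s hs =>
    one_le_vnorm_vecMul_mul hxR hx (hSR s hs).1 g
  have hC : 0 < C := by
    obtain ⟨s, hs⟩ := hS
    exact pos_iff_ne_zero.2 (right_ne_zero_of_mul (one_pos.trans_le (key s hs)).ne')
  have hlow : ∀ s ∈ S, C⁻¹ ≤ N s := fun s hs => (inv_le_iff_one_le_mul₀ hC).2 (key s hs)
  obtain ⟨s₀, hs₀, hmin⟩ := WithZero.exists_min_of_le hS (inv_pos.2 hC).ne' hlow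
  exact ⟨s₀, hs₀, (inv_pos.2 hC).trans_le (hlow s₀ hs₀), hmin⟩
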